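/- Let E be a real normed vector space, let G : [0,1] → E be continuous (hence uniformly continuous), and for each n ≥ 1 let {λ_{n,i} : [0,1] → [0,1]}_{i=0,…,n} be a partition of unity subordinate to the cover by the intervals U_{n,i} = ((i−1)/n, (i+1)/n) ∩ [0,1]. Define C_n : [0,1]² → E by C_n(s, t) = ∑_{i=0}^{n} G(s·i/n)·λ_{n,i}(t). Then C_n converges uniformly on [0,1]² to the map (s, t) ↦ G(s·t). -/
import Mathlib


open Finset in
/-- If `G : [0,1] → E` is continuous into a real normed vector space and, for each
`n ≥ 1`, `(lam n i)_{i=0,…,n}` is a partition of unity on `[0,1]` subordinate to the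
cover by the intervals `((i−1)/n, (i+1)/n) ∩ [0,1]`, then the maps
`C_n(s,t) = ∑_{i=0}^{n} lam n i t • G(s·i/n)` converge uniformly on `[0,1]²` to
`(s,t) ↦ G(s·t)`. -/
theorem stmt_12 {E : Type*} [NormedAddCommGroup E] [NormedSpace ℝ E]
    (G : ℝ → E) (hG : ContinuousOn G (Set.Icc 0 1))
    (lam : (n : ℕ) → Fin (n + 1) → ℝ → ℝ)
    (hcont : ∀ n, 1 ≤ n → ∀ i, Continuous (lam n i))
    (hnonneg : ∀ n, 1 ≤ n → ∀ i, ∀ t ∈ Set.Icc (0 : ℝ) 1, 0 ≤ lam n i t)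
    (hsum : ∀ n, 1 ≤ n → ∀ t ∈ Set.Icc (0 : ℝ) 1, ∑ i : Fin (n + 1), lam n i t = 1)
    (hsupp : ∀ n, 1 ≤ n → ∀ i : Fin (n + 1), ∀ t ∈ Set.Icc (0 : ℝ) 1,
      lam n i t ≠ 0 → ((i : ℝ) - 1) / n < t ∧ t < ((i : ℝ) + 1) / n) :
    ∀ ε > 0, ∃ N : ℕ, ∀ n, N ≤ n → 1 ≤ n →
      ∀ s ∈ Set.Icc (0 : ℝ) 1, ∀ t ∈ Set.Icc (0 : ℝ) 1,
        ‖(∑ i : Fin (n + 1), lam n i t • G (s * i / n)) - G (s * t)‖ < ε := by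
  intro ε hε
  have hu : UniformContinuousOn G (Set.Icc 0 1) :=
    isCompact_Icc.uniformContinuousOn_of_continuous hG
  rw [Metric.uniformContinuousOn_iff] at hu
  obtain ⟨δ, hδ, hδ'⟩ := hu (ε / 2) (by positivity)
  obtain ⟨N, hN⟩ := exists_nat_gt (1 / δ)
  refine ⟨N, ?_⟩
  intro n hn hn1 s hs t ht
  have hnpos : (0 : ℝ) < n := by exact_mod_cast Nat.lt_of_lt_of_le Nat.zero_lt_one hn1
  have hninv : 1 / (n : ℝ) < δ := by
    rw [div_lt_iff₀ hnpos]
    have hNn : (1 : ℝ) / δ < n := lt_of_lt_of_le hN (by exact_mod_cast hn)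
    rw [div_lt_iff₀ hδ] at hNn
    linarith
  have hsum' := hsum n hn1 t ht
  have key : (∑ i : Fin (n + 1), lam n i t • G (s * i / n)) - G (s * t)
      = ∑ i : Fin (n + 1), lam n i t • (G (s * i / n) - G (s * t)) := by
    simp only [smul_sub, Finset.sum_sub_distrib, ← Finset.sum_smul, hsum', one_smul]
  rw [key]
  have hst : s * t ∈ Set.Icc (0 : ℝ) 1 := by
    obtain ⟨hs0, hs1⟩ := hs; obtain ⟨ht0, ht1⟩ := ht
    exact ⟨by positivity, by nlinarith⟩
  calc ‖∑ i : Fin (n + 1), lam n i t • (G (s * i / n) - G (s * t))‖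
      ≤ ∑ i : Fin (n + 1), ‖lam n i t • (G (s * i / n) - G (s * t))‖ :=
        norm_sum_le _ _
    _ ≤ ∑ i : Fin (n + 1), lam n i t * (ε / 2) := by
        apply Finset.sum_le_sum
        intro i _
        by_cases hz : lam n i t = 0
        · simp [hz]
        · rw [norm_smul, Real.norm_eq_abs, abs_of_nonneg (hnonneg n hn1 i t ht)]
          apply mul_le_mul_of_nonneg_left _ (hnonneg n hn1 i t ht)
          have hi : ((i : ℕ) : ℝ) ≤ n := by exact_mod_cast Nat.lt_succ_iff.mp i.isLt
          have hsin : s * i / n ∈ Set.Icc (0 : ℝ) 1 := by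
            obtain ⟨hs0, hs1⟩ := hs
            constructor
            · positivity
            · rw [div_le_one hnpos]; nlinarith [Nat.cast_nonneg (α := ℝ) (i : ℕ)]
          obtain ⟨h1, h2⟩ := hsupp n hn1 i t ht hz
          rw [div_lt_iff₀ hnpos] at h1
          rw [lt_div_iff₀ hnpos] at h2
          have hdist : dist (s * i / n) (s * t) < δ := by
            obtain ⟨hs0, hs1⟩ := hs
            have heq : s * (i : ℝ) / n - s * t = s * ((i : ℝ) - t * n) / n := by
              field_simp
            have hA : s * ((i : ℝ) - t * n) ≤ 1 := by nlinarith
            have hB : -1 ≤ s * ((i : ℝ) - t * n) := by nlinarith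
            rw [Real.dist_eq, heq, abs_div, abs_of_pos hnpos]
            calc |s * ((i : ℝ) - t * n)| / n ≤ 1 / n := by
                  gcongr
                  exact abs_le.mpr ⟨hB, hA⟩
              _ < δ := hninv
          have := hδ' _ hsin _ hst hdist
          rw [dist_eq_norm] at this
          linarith
    _ = ε / 2 := by rw [← Finset.sum_mul, hsum', one_mul]
    _ < ε := by linarith
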